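/- arXiv:2211.02395 — 2 statements merged into one kernel-verified Lean document; each statement's English description precedes it below -/
import Mathlib

section
/- DOM(K₃ □ K₃) = 4. -/
open SimpleGraph

variable {V : Type*}

/-- `D` is an orientation of the simple graph `G`: arcs only along edges, and each edge
gets exactly one of its two possible directions. -/
def IsOrientation (G : SimpleGraph V) (D : V → V → Prop) : Prop :=
  (∀ u v, D u v → G.Adj u v) ∧ (∀ u v, G.Adj u v → (D u v ↔ ¬ D v u))

/-- `S` is a dominating set of the digraph `D`. -/
def IsDomSet (D : V → V → Prop) (S : Finset V) : Prop :=
  ∀ v, v ∉ S → ∃ u ∈ S, D u v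

/-- Domination number of a digraph. -/
noncomputable def domNum (D : V → V → Prop) : ℕ :=
  sInf {n | ∃ S : Finset V, S.card = n ∧ IsDomSet D S}

/-- Orientable domination number of a graph. -/
noncomputable def DOM (G : SimpleGraph V) : ℕ :=
  sSup {n | ∃ D : V → V → Prop, IsOrientation G D ∧ domNum D = n}

/-- Independence number. -/
noncomputable def indepNum (G : SimpleGraph V) : ℕ :=
  sSup {n | ∃ S : Finset V, S.card = n ∧ ∀ u ∈ S, ∀ v ∈ S, ¬ G.Adj u v}

/-- Matching number. -/
noncomputable def matchNum (G : SimpleGraph V) : ℕ :=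
  sSup {n | ∃ M : Finset (Sym2 V), M.card = n ∧ (∀ e ∈ M, e ∈ G.edgeSet) ∧
    ∀ e ∈ M, ∀ f ∈ M, e ≠ f → ∀ v, v ∈ e → v ∉ f}

/-- Maximum order of a bipartite induced subgraph. -/
noncomputable def bipNum (G : SimpleGraph V) : ℕ :=
  sSup {n | ∃ s : Finset V, s.card = n ∧ (G.induce (s : Set V)).Colorable 2}

/-- Join of `G` with a single universal vertex (`none`). -/
def joinK1 (G : SimpleGraph V) : SimpleGraph (Option V) :=
  SimpleGraph.fromRel (fun a b => a = none ∨ ∃ u v, a = some u ∧ b = some v ∧ G.Adj u v)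

/-- Lexicographic product `G ∘ H`. -/
def lexProd {W : Type*} (G : SimpleGraph V) (H : SimpleGraph W) : SimpleGraph (V × W) :=
  SimpleGraph.fromRel (fun a b => G.Adj a.1 b.1 ∨ (a.1 = b.1 ∧ H.Adj a.2 b.2))

/-- Corona `G ⊙ H`: vertex `(u, none)` is the vertex `u` of `G`, the vertices `(u, some w)`
form the copy of `H` joined to `u`. -/
def corona {W : Type*} (G : SimpleGraph V) (H : SimpleGraph W) : SimpleGraph (V × Option W) :=
  SimpleGraph.fromRel (fun a b =>
    (a.2 = none ∧ b.2 = none ∧ G.Adj a.1 b.1) ∨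
    (a.1 = b.1 ∧ ∃ w w', a.2 = some w ∧ b.2 = some w' ∧ H.Adj w w') ∨
    (a.1 = b.1 ∧ a.2 = none ∧ b.2 ≠ none))

/-- A digraph is acyclic if it has no directed cycle. -/
def DigraphAcyclic (D : V → V → Prop) : Prop :=
  ¬ ∃ (m : ℕ) (c : ℕ → V), 0 < m ∧ (∀ i < m, D (c i) (c (i + 1))) ∧ c m = c 0

/-- A packing of a digraph: no arc joins two of its vertices and no vertex has two
out-neighbors in it. -/
def IsPacking (D : V → V → Prop) (P : Finset V) : Prop :=
  (∀ u ∈ P, ∀ v ∈ P, ¬ D u v) ∧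
  (∀ u ∈ P, ∀ v ∈ P, u ≠ v → ∀ w, ¬ (D w u ∧ D w v))

/-- Packing number of a digraph. -/
noncomputable def packNum (D : V → V → Prop) : ℕ :=
  sSup {n | ∃ P : Finset V, P.card = n ∧ IsPacking D P}


/-! Under an orientation, every row and every column of `K₃ □ K₃` is a tournament on three
vertices, so it either has a source or is a rotation `x ↦ x + e` of `Fin 3`. If some row has a
source `s`, then `s`, together with the tail of the arc joining the two vertices outside that row
in each column, dominates; columns are handled by transposing. Otherwise row `i` turns by `ε i`
and column `j` by `δ j`. If `δ` is not constant, two suitably placed vertices in each of rows 1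
and 2 dominate, and symmetrically if `ε` is not constant; if both are constant, a diagonal does.
The rotation orientation with one column reversed needs four vertices. -/

open Finset

theorem IsDomSet.map {W : Type*} {D : W → W → Prop} (e : V ≃ W) {S : Finset V}
    (h : IsDomSet (fun u v => D (e u) (e v)) S) : IsDomSet D (S.map e.toEmbedding) := by
  intro w hw
  obtain ⟨u, hu, huw⟩ := h (e.symm w) fun hS => hw (by simpa using mem_map_of_mem e.toEmbedding hS)
  exact ⟨e u, mem_map_of_mem _ hu, by simpa using huw⟩

theorem IsOrientation.total {G : SimpleGraph V} {D : V → V → Prop} (hD : IsOrientation G D)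
    {u v : V} (h : G.Adj u v) : D u v ∨ D v u := by
  by_cases huv : D u v
  · exact Or.inl huv
  · exact Or.inr ((hD.2 v u h.symm).2 huv)

theorem domNum_le_card {D : V → V → Prop} {S : Finset V} (h : IsDomSet D S) :
    domNum D ≤ S.card :=
  Nat.sInf_le ⟨S, rfl, h⟩

theorem le_domNum [Fintype V] {D : V → V → Prop} {n : ℕ}
    (h : ∀ S, IsDomSet D S → n ≤ S.card) : n ≤ domNum D :=
  le_csInf ⟨_, univ, rfl, fun v hv => absurd (mem_univ v) hv⟩
    (by rintro m ⟨S, rfl, hS⟩; exact h S hS)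

theorem DOM_eq {G : SimpleGraph V} {n : ℕ} (hle : ∀ D, IsOrientation G D → domNum D ≤ n)
    (hD : ∃ D, IsOrientation G D ∧ domNum D = n) : DOM G = n :=
  IsGreatest.csSup_eq ⟨hD, by rintro m ⟨D, hD, rfl⟩; exact hle D hD⟩

theorem Fin3.exists_source_or_rotation {E : Fin 3 → Fin 3 → Prop}
    (h : ∀ x y, x ≠ y → E x y ∨ E y x) : (∃ s, ∀ x ≠ s, E s x) ∨ ∃ e ≠ 0, ∀ x, E x (x + e) := by
  rcases h 0 1 (by decide) with h01 | h10
  · rcases h 0 2 (by decide) with h02 | h20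
    · exact Or.inl ⟨0, fun x hx => by fin_cases x <;> first | exact absurd rfl hx | assumption⟩
    rcases h 1 2 (by decide) with h12 | h21
    · exact Or.inr ⟨1, by decide, fun x => by fin_cases x <;> assumption⟩
    · exact Or.inl ⟨2, fun x hx => by fin_cases x <;> first | exact absurd rfl hx | assumption⟩
  · rcases h 1 2 (by decide) with h12 | h21
    · exact Or.inl ⟨1, fun x hx => by fin_cases x <;> first | exact absurd rfl hx | assumption⟩
    rcases h 0 2 (by decide) with h02 | h20
    · exact Or.inr ⟨2, by decide, fun x => by fin_cases x <;> assumption⟩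
    · exact Or.inl ⟨2, fun x hx => by fin_cases x <;> first | exact absurd rfl hx | assumption⟩

theorem Fin3.exists_eq_two_eq_one_or_const {α : Type*} (f : α → Fin 3) (hf : ∀ a, f a ≠ 0) :
    (∃ a b, f a = 2 ∧ f b = 1) ∨ ∃ c, ∀ a, f a = c := by
  have h12 : ∀ a, f a = 1 ∨ f a = 2 := fun a => by have := hf a; omega
  by_cases hmix : ∃ a b, f a = 2 ∧ f b = 1
  · exact Or.inl hmix
  refine Or.inr ?_
  by_cases h1 : ∃ b, f b = 1
  · obtain ⟨b, hb⟩ := h1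
    exact ⟨1, fun a => (h12 a).resolve_right fun ha => hmix ⟨a, b, ha, hb⟩⟩
  · exact ⟨2, fun a => (h12 a).resolve_left fun ha => h1 ⟨a, ha⟩⟩

theorem Fin3.eq_or_eq_add_one_or_eq_add_two : ∀ x i : Fin 3, x = i ∨ x = i + 1 ∨ x = i + 2 := by
  decide

theorem Fin3.add_one_ne_add_two : ∀ i : Fin 3, i + 1 ≠ i + 2 := by
  decide

theorem Fin3.sub_eq_mul_or_eq_mul_sub :
    ∀ e d x y : Fin 3, e ≠ 0 → d ≠ 0 → y ≠ e * d * x → y - e = e * d * x ∨ y = e * d * (x - d) := by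
  decide

theorem Fin3.card_filter_rows_le : ∀ c₁ c₂ : Fin 3,
    (univ.filter fun v : Fin 3 × Fin 3 =>
      (v.1 = 1 ∧ v.2 ≠ c₂) ∨ (v.1 = 2 ∧ v.2 ≠ c₁)).card ≤ 4 := by
  decide

theorem Fin3.card_filter_diagonal_le : ∀ k : Fin 3,
    (univ.filter fun v : Fin 3 × Fin 3 => v.2 = k * v.1).card ≤ 4 := by
  decide

section Rook

variable {D : Fin 3 × Fin 3 → Fin 3 × Fin 3 → Prop}

theorem exists_isDomSet_of_row_source
    (hcol : ∀ j x y, x ≠ y → D (x, j) (y, j) ∨ D (y, j) (x, j)) {i j₀ : Fin 3}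
    (hs : ∀ j ≠ j₀, D (i, j₀) (i, j)) :
    ∃ S : Finset (Fin 3 × Fin 3), S.card ≤ 4 ∧ IsDomSet D S := by
  classical
  let tail : Fin 3 → Fin 3 × Fin 3 := fun j =>
    if D (i + 1, j) (i + 2, j) then (i + 1, j) else (i + 2, j)
  have htail : ∀ j, (tail j = (i + 1, j) ∧ D (i + 1, j) (i + 2, j)) ∨
      (tail j = (i + 2, j) ∧ D (i + 2, j) (i + 1, j)) := by
    intro j
    by_cases h : D (i + 1, j) (i + 2, j)
    · exact Or.inl ⟨if_pos h, h⟩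
    · exact Or.inr ⟨if_neg h, (hcol j _ _ (Fin3.add_one_ne_add_two i)).resolve_left h⟩
  refine ⟨insert (i, j₀) (univ.image tail), ?_, ?_⟩
  · calc (insert (i, j₀) (univ.image tail)).card ≤ (univ.image tail).card + 1 := card_insert_le _ _
      _ ≤ 3 + 1 := by gcongr; simpa using card_image_le (s := univ) (f := tail)
  rintro ⟨x, j⟩ hv
  have htail_mem : tail j ∈ insert (i, j₀) (univ.image tail) := by simp
  rcases Fin3.eq_or_eq_add_one_or_eq_add_two x i with hx | hx | hx <;> subst x
  · exact ⟨(i, j₀), mem_insert_self _ _, hs j fun h => hv (by simp [h])⟩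
  · rcases htail j with ⟨h, -⟩ | ⟨h, hD⟩
    · exact absurd (h ▸ htail_mem) hv
    · exact ⟨tail j, htail_mem, h ▸ hD⟩
  · rcases htail j with ⟨h, hD⟩ | ⟨h, -⟩
    · exact ⟨tail j, htail_mem, h ▸ hD⟩
    · exact absurd (h ▸ htail_mem) hv

section Rotation

variable {ε δ : Fin 3 → Fin 3} (hε : ∀ i x, D (i, x) (i, x + ε i))
  (hδ : ∀ j x, D (x, j) (x + δ j, j))
include hε hδ

theorem isDomSet_of_forall_pred_mem {S : Finset (Fin 3 × Fin 3)}
    (h : ∀ v ∉ S, (v.1, v.2 - ε v.1) ∈ S ∨ (v.1 - δ v.2, v.2) ∈ S) : IsDomSet D S := by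
  rintro ⟨x, y⟩ hv
  rcases h (x, y) hv with h | h
  · exact ⟨_, h, by simpa using hε x (y - ε x)⟩
  · exact ⟨_, h, by simpa using hδ y (x - δ y)⟩

-- Two vertices of a directed triangle dominate it, which settles rows 1 and 2; a vertex `(0, c)`
-- is entered from `(1, c)` if `δ c = 2` and from `(2, c)` if `δ c = 1`.
theorem isDomSet_of_column_rotations_mixed (hε0 : ∀ i, ε i ≠ 0) (hδ0 : ∀ j, δ j ≠ 0)
    {c₁ c₂ : Fin 3} (h₁ : δ c₁ = 2) (h₂ : δ c₂ = 1) :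
    IsDomSet D (univ.filter fun v => (v.1 = 1 ∧ v.2 ≠ c₂) ∨ (v.1 = 2 ∧ v.2 ≠ c₁)) := by
  refine isDomSet_of_forall_pred_mem hε hδ ?_
  rintro ⟨x, y⟩ hv
  simp only [mem_filter, mem_univ, true_and] at hv ⊢
  fin_cases x
  · right
    rcases (show δ y = 1 ∨ δ y = 2 by have := hδ0 y; omega) with hy | hy
    · exact Or.inr ⟨by rw [hy]; decide, fun h => by simp_all⟩
    · exact Or.inl ⟨by rw [hy]; decide, fun h => by simp_all⟩
  · obtain rfl : y = c₂ := by simpa using hv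
    exact Or.inl (Or.inl ⟨rfl, by simpa using hε0 1⟩)
  · obtain rfl : y = c₁ := by simpa using hv
    exact Or.inl (Or.inr ⟨rfl, by simpa using hε0 2⟩)

-- Row arcs raise `y - e * d * x` by `e` and column arcs lower it by `e * d * d = e`, so every
-- vertex off the diagonal is entered from it.
theorem isDomSet_diagonal_of_rotations_const {e d : Fin 3} (he : ∀ i, ε i = e)
    (hd : ∀ j, δ j = d) (he0 : e ≠ 0) (hd0 : d ≠ 0) :
    IsDomSet D (univ.filter fun v => v.2 = e * d * v.1) := by
  refine isDomSet_of_forall_pred_mem hε hδ ?_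
  rintro ⟨x, y⟩ hv
  simp only [mem_filter, mem_univ, true_and, he, hd] at hv ⊢
  exact Fin3.sub_eq_mul_or_eq_mul_sub e d x y he0 hd0 hv

theorem exists_isDomSet_of_rotations (hε0 : ∀ i, ε i ≠ 0) (hδ0 : ∀ j, δ j ≠ 0) :
    ∃ S : Finset (Fin 3 × Fin 3), S.card ≤ 4 ∧ IsDomSet D S := by
  rcases Fin3.exists_eq_two_eq_one_or_const δ hδ0 with ⟨c₁, c₂, h₁, h₂⟩ | ⟨d, hd⟩
  · exact ⟨_, Fin3.card_filter_rows_le c₁ c₂,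
      isDomSet_of_column_rotations_mixed hε hδ hε0 hδ0 h₁ h₂⟩
  rcases Fin3.exists_eq_two_eq_one_or_const ε hε0 with ⟨r₁, r₂, h₁, h₂⟩ | ⟨e, he⟩
  · have hS := isDomSet_of_column_rotations_mixed (D := fun u v => D u.swap v.swap)
      hδ hε hδ0 hε0 h₁ h₂
    exact ⟨_, (card_map _).trans_le (Fin3.card_filter_rows_le r₁ r₂),
      hS.map (Equiv.prodComm _ _)⟩
  · exact ⟨_, Fin3.card_filter_diagonal_le _,
      isDomSet_diagonal_of_rotations_const hε hδ he hd (he 0 ▸ hε0 0) (hd 0 ▸ hδ0 0)⟩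

end Rotation

theorem exists_isDomSet_card_le_four
    (hrow : ∀ i x y, x ≠ y → D (i, x) (i, y) ∨ D (i, y) (i, x))
    (hcol : ∀ j x y, x ≠ y → D (x, j) (y, j) ∨ D (y, j) (x, j)) :
    ∃ S : Finset (Fin 3 × Fin 3), S.card ≤ 4 ∧ IsDomSet D S := by
  by_cases hrow_src : ∃ i j₀, ∀ j ≠ j₀, D (i, j₀) (i, j)
  · obtain ⟨i, j₀, hs⟩ := hrow_src
    exact exists_isDomSet_of_row_source hcol hs
  by_cases hcol_src : ∃ j i₀, ∀ i ≠ i₀, D (i₀, j) (i, j)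
  · obtain ⟨j, i₀, hs⟩ := hcol_src
    obtain ⟨S, hcard, hS⟩ :=
      exists_isDomSet_of_row_source (D := fun u v => D u.swap v.swap) hrow hs
    exact ⟨_, (card_map _).trans_le hcard, hS.map (Equiv.prodComm _ _)⟩
  have hε : ∀ i, ∃ e ≠ 0, ∀ x, D (i, x) (i, x + e) := fun i =>
    (Fin3.exists_source_or_rotation (hrow i)).resolve_left fun ⟨s, hs⟩ => hrow_src ⟨i, s, hs⟩
  have hδ : ∀ j, ∃ d ≠ 0, ∀ x, D (x, j) (x + d, j) := fun j =>
    (Fin3.exists_source_or_rotation (hcol j)).resolve_left fun ⟨s, hs⟩ => hcol_src ⟨j, s, hs⟩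
  choose ε hε0 hε using hε
  choose δ hδ0 hδ using hδ
  exact exists_isDomSet_of_rotations hε hδ hε0 hδ0

end Rook

theorem domNum_le_four_of_isOrientation {D : Fin 3 × Fin 3 → Fin 3 × Fin 3 → Prop}
    (hD : IsOrientation ((⊤ : SimpleGraph (Fin 3)) □ ⊤) D) : domNum D ≤ 4 := by
  obtain ⟨S, hcard, hS⟩ := exists_isDomSet_card_le_four
    (fun i x y hxy => hD.total (boxProd_adj_right.2 hxy))
    (fun j x y hxy => hD.total (boxProd_adj_left.2 hxy))
  exact (domNum_le_card hS).trans hcard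

def rotationDigraph (ε δ : Fin 3 → Fin 3) (u v : Fin 3 × Fin 3) : Prop :=
  (u.1 = v.1 ∧ v.2 = u.2 + ε u.1) ∨ (u.2 = v.2 ∧ v.1 = u.1 + δ u.2)

theorem isOrientation_rotationDigraph_twisted :
    IsOrientation ((⊤ : SimpleGraph (Fin 3)) □ ⊤) (rotationDigraph 1 ![1, 1, 2]) := by
  simp only [IsOrientation, boxProd_adj, top_adj, rotationDigraph]
  decide

set_option maxRecDepth 100000 in
theorem four_le_card_of_isDomSet_rotationDigraph_twisted :
    ∀ S, IsDomSet (rotationDigraph 1 ![1, 1, 2]) S → 4 ≤ S.card := by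
  unfold IsDomSet rotationDigraph
  decide

theorem stmt14 :
    DOM ((⊤ : SimpleGraph (Fin 3)) □ (⊤ : SimpleGraph (Fin 3))) = 4 :=
  DOM_eq (fun _ => domNum_le_four_of_isOrientation)
    ⟨_, isOrientation_rotationDigraph_twisted,
      le_antisymm (domNum_le_four_of_isOrientation isOrientation_rotationDigraph_twisted)
        (le_domNum four_le_card_of_isDomSet_rotationDigraph_twisted)⟩
end

section
/- For any graphs G and H, α(G)·DOM(H) ≤ DOM(G ∘ H) ≤ min{DOM(G)·n(H), DOM(H)·n(G)}, where G ∘ H is the lexicographic product. -/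
open SimpleGraph

variable {V : Type*}

/-!
Upper bounds: every orientation of `G ∘ H` restricts to an orientation of each copy `G × {w}`
of `G` and of each copy `{u} × H` of `H`, and the union of dominating sets of the copies
dominates the whole product.

Lower bound: orient `G` so that no arc enters a maximum independent set `A`, orient each copy of
`H` by an orientation realising `DOM H`, and orient the product lexicographically. A vertex
`(u, w)` with `u ∈ A` can then only be dominated from inside its own copy of `H`, so a
dominating set meets each of the `α(G)` copies over `A` in at least `DOM H` vertices.
-/

open Finset

section Digraph

lemma domNum_le_card_of_isDomSet {D : V → V → Prop} {S : Finset V} (hS : IsDomSet D S) :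
    domNum D ≤ #S :=
  Nat.sInf_le ⟨S, rfl, hS⟩

lemma isDomSet_univ [Fintype V] (D : V → V → Prop) : IsDomSet D univ :=
  fun v hv => absurd (mem_univ v) hv

lemma domNum_le_card_s17 [Fintype V] (D : V → V → Prop) : domNum D ≤ Fintype.card V :=
  domNum_le_card_of_isDomSet (isDomSet_univ D)

lemma exists_isDomSet_card_eq_domNum [Fintype V] (D : V → V → Prop) :
    ∃ S : Finset V, #S = domNum D ∧ IsDomSet D S :=
  Nat.sInf_mem (s := {n | ∃ S : Finset V, #S = n ∧ IsDomSet D S}) ⟨_, univ, rfl, isDomSet_univ D⟩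

lemma domNum_le_sum_of_cover {ι β : Type*} [Fintype ι] [Fintype β] [DecidableEq V]
    (D : V → V → Prop) (f : ι → β → V) (hf : ∀ v, ∃ i b, f i b = v) :
    domNum D ≤ ∑ i, domNum (fun a b => D (f i a) (f i b)) := by
  choose S hS_card hS using fun i => exists_isDomSet_card_eq_domNum (fun a b => D (f i a) (f i b))
  have hdom : IsDomSet D (univ.biUnion fun i => (S i).image (f i)) := by
    intro v hv
    obtain ⟨i, b, rfl⟩ := hf v
    have hb : b ∉ S i := fun hb => hv (mem_biUnion.2 ⟨i, mem_univ i, mem_image_of_mem _ hb⟩)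
    obtain ⟨a, ha, hab⟩ := hS i b hb
    exact ⟨f i a, mem_biUnion.2 ⟨i, mem_univ i, mem_image_of_mem _ ha⟩, hab⟩
  calc domNum D ≤ #(univ.biUnion fun i => (S i).image (f i)) := domNum_le_card_of_isDomSet hdom
    _ ≤ ∑ i, #((S i).image (f i)) := card_biUnion_le
    _ ≤ ∑ i, #(S i) := sum_le_sum fun i _ => card_image_le
    _ = _ := sum_congr rfl fun i _ => hS_card i

end Digraph

section Orientation

variable {V' : Type*} {G : SimpleGraph V} {G' : SimpleGraph V'}

lemma IsOrientation.comap {D : V' → V' → Prop} (hD : IsOrientation G' D) (f : G ↪g G') :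
    IsOrientation G (fun u v => D (f u) (f v)) :=
  ⟨fun _ _ h => f.map_adj_iff.1 (hD.1 _ _ h), fun _ _ h => hD.2 _ _ (f.map_adj_iff.2 h)⟩

lemma IsOrientation.irrefl {D : V → V → Prop} (hD : IsOrientation G D) (v : V) : ¬ D v v :=
  fun h => G.irrefl (hD.1 v v h)

lemma exists_isOrientation (G : SimpleGraph V) : ∃ D, IsOrientation G D := by
  let := IsWellOrder.linearOrder (WellOrderingRel (α := V))
  refine ⟨fun u v => G.Adj u v ∧ u < v, fun u v h => h.1, fun u v h => ?_⟩
  simp only [h, h.symm, true_and, not_lt]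
  exact ⟨le_of_lt, fun h' => lt_of_le_of_ne h' h.ne⟩

lemma exists_isOrientation_notMem_of_isIndepSet {A : Set V} (hA : G.IsIndepSet A) :
    ∃ D, IsOrientation G D ∧ ∀ u v, D u v → v ∉ A := by
  obtain ⟨D₀, hD₀⟩ := exists_isOrientation G
  have hA' : ∀ u v, G.Adj u v → u ∈ A → v ∉ A := fun u v h hu hv => hA hu hv h.ne h
  refine ⟨fun u v => G.Adj u v ∧ (u ∈ A ∨ v ∉ A ∧ D₀ u v), ⟨fun u v h => h.1, fun u v h => ?_⟩,
    fun u v ⟨h, h'⟩ => h'.elim (hA' u v h) And.left⟩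
  by_cases hu : u ∈ A
  · simp [h, h.symm, hu, hA' u v h hu]
  by_cases hv : v ∈ A
  · simp [h, h.symm, hu, hv]
  · simp [h, h.symm, hu, hv, hD₀.2 u v h]

lemma DOM_le {k : ℕ} (h : ∀ D, IsOrientation G D → domNum D ≤ k) : DOM G ≤ k := by
  obtain ⟨D, hD⟩ := exists_isOrientation G
  exact csSup_le ⟨_, D, hD, rfl⟩ fun n ⟨D, hD, hn⟩ => hn ▸ h D hD

variable [Fintype V]

lemma bddAbove_domNum_orientations (G : SimpleGraph V) :
    BddAbove {n | ∃ D : V → V → Prop, IsOrientation G D ∧ domNum D = n} :=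
  ⟨Fintype.card V, fun _ ⟨D, _, hn⟩ => hn ▸ domNum_le_card_s17 D⟩

lemma domNum_le_DOM {D : V → V → Prop} (hD : IsOrientation G D) : domNum D ≤ DOM G :=
  le_csSup (bddAbove_domNum_orientations G) ⟨D, hD, rfl⟩

lemma exists_isOrientation_domNum_eq_DOM (G : SimpleGraph V) :
    ∃ D, IsOrientation G D ∧ domNum D = DOM G := by
  obtain ⟨D, hD⟩ := exists_isOrientation G
  exact Nat.sSup_mem (s := {n | ∃ D : V → V → Prop, IsOrientation G D ∧ domNum D = n})
    ⟨_, D, hD, rfl⟩ (bddAbove_domNum_orientations G)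

end Orientation

lemma exists_isIndepSet_card_eq_indepNum [Fintype V] (G : SimpleGraph V) :
    ∃ A : Finset V, G.IsIndepSet (A : Set V) ∧ #A = _root_.indepNum G := by
  obtain ⟨A, hA_card, hA⟩ := Nat.sSup_mem (s := {n | ∃ S : Finset V, #S = n ∧
      ∀ u ∈ S, ∀ v ∈ S, ¬ G.Adj u v})
    ⟨0, ∅, card_empty, by simp⟩ ⟨Fintype.card V, fun _ ⟨S, hS, _⟩ => hS ▸ card_le_univ S⟩
  exact ⟨A, fun u hu v hv _ => hA u hu v hv, hA_card⟩

section LexProd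

variable {W : Type*}

lemma lexProd_adj {G : SimpleGraph V} {H : SimpleGraph W} {a b : V × W} :
    (lexProd G H).Adj a b ↔ G.Adj a.1 b.1 ∨ a.1 = b.1 ∧ H.Adj a.2 b.2 := by
  simp only [lexProd, SimpleGraph.fromRel_adj]
  constructor
  · rintro ⟨-, (h | h) | h | ⟨h₁, h₂⟩⟩
    exacts [.inl h, .inr h, .inl h.symm, .inr ⟨h₁.symm, h₂.symm⟩]
  · rintro (h | h)
    · exact ⟨fun hab => h.ne (congrArg Prod.fst hab), .inl (.inl h)⟩
    · exact ⟨fun hab => h.2.ne (congrArg Prod.snd hab), .inl (.inr h)⟩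

def lexProdLeft (G : SimpleGraph V) (H : SimpleGraph W) (w : W) : G ↪g lexProd G H where
  toFun u := (u, w)
  inj' _ _ h := congrArg Prod.fst h
  map_rel_iff' := lexProd_adj.trans (or_iff_left fun h => H.irrefl h.2)

def lexProdRight (G : SimpleGraph V) (H : SimpleGraph W) (u : V) : H ↪g lexProd G H where
  toFun w := (u, w)
  inj' _ _ h := congrArg Prod.snd h
  map_rel_iff' := lexProd_adj.trans ((or_iff_right G.irrefl).trans (and_iff_right rfl))

def lexDigraph (DG : V → V → Prop) (DH : W → W → Prop) (a b : V × W) : Prop :=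
  DG a.1 b.1 ∨ a.1 = b.1 ∧ DH a.2 b.2

variable {G : SimpleGraph V} {H : SimpleGraph W}

lemma IsOrientation.lexDigraph {DG : V → V → Prop} {DH : W → W → Prop}
    (hDG : IsOrientation G DG) (hDH : IsOrientation H DH) :
    IsOrientation (lexProd G H) (lexDigraph DG DH) := by
  refine ⟨fun a b h => lexProd_adj.2 (h.imp (hDG.1 _ _) (And.imp_right (hDH.1 _ _))),
    fun ⟨u, w⟩ ⟨v, w'⟩ h => ?_⟩
  rcases lexProd_adj.1 h with h | ⟨rfl, h⟩
  · simp [_root_.lexDigraph, h.ne, h.ne.symm, hDG.2 u v h]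
  · simp [_root_.lexDigraph, hDG.irrefl, hDH.2 w w' h]

lemma IsDomSet.domNum_le_card_fiber [DecidableEq V] [DecidableEq W]
    {DG : V → V → Prop} {DH : W → W → Prop} {S : Finset (V × W)}
    (hS : IsDomSet (lexDigraph DG DH) S) {u : V} (hu : ∀ v, ¬ DG v u) :
    domNum DH ≤ #{p ∈ S | p.1 = u} := by
  have hdom : IsDomSet DH ({p ∈ S | p.1 = u}.image Prod.snd) := by
    intro w hw
    have hnot : (u, w) ∉ S := fun h => hw (mem_image.2 ⟨(u, w), mem_filter.2 ⟨h, rfl⟩, rfl⟩)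
    obtain ⟨p, hp, h | ⟨hpu, h⟩⟩ := hS (u, w) hnot
    · exact absurd h (hu p.1)
    · exact ⟨p.2, mem_image.2 ⟨p, mem_filter.2 ⟨hp, hpu⟩, rfl⟩, h⟩
  exact (domNum_le_card_of_isDomSet hdom).trans card_image_le

variable [Fintype V] [Fintype W]

theorem indepNum_mul_DOM_le_DOM_lexProd (G : SimpleGraph V) (H : SimpleGraph W) :
    _root_.indepNum G * DOM H ≤ DOM (lexProd G H) := by
  classical
  obtain ⟨A, hA, hA_card⟩ := exists_isIndepSet_card_eq_indepNum G
  obtain ⟨DG, hDG, hDG_A⟩ := exists_isOrientation_notMem_of_isIndepSet hA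
  obtain ⟨DH, hDH, hDH_dom⟩ := exists_isOrientation_domNum_eq_DOM H
  obtain ⟨S, hS_card, hS⟩ := exists_isDomSet_card_eq_domNum (lexDigraph DG DH)
  calc _root_.indepNum G * DOM H = ∑ _u ∈ A, domNum DH := by simp [hA_card, hDH_dom]
    _ ≤ ∑ u ∈ A, #{p ∈ S | p.1 = u} :=
      sum_le_sum fun u hu => hS.domNum_le_card_fiber fun v h => hDG_A v u h hu
    _ = #{p ∈ S | p.1 ∈ A} := sum_card_fiberwise_eq_card_filter S A Prod.fst
    _ ≤ #S := card_filter_le _ _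
    _ = domNum (lexDigraph DG DH) := hS_card
    _ ≤ DOM (lexProd G H) := domNum_le_DOM (hDG.lexDigraph hDH)

theorem DOM_lexProd_le_DOM_left_mul_card (G : SimpleGraph V) (H : SimpleGraph W) :
    DOM (lexProd G H) ≤ DOM G * Fintype.card W := by
  classical
  refine DOM_le fun D hD => ?_
  calc domNum D ≤ ∑ w, domNum (fun u v => D (u, w) (v, w)) :=
        domNum_le_sum_of_cover D (fun w u => (u, w)) fun p => ⟨p.2, p.1, rfl⟩
    _ ≤ ∑ _w : W, DOM G := sum_le_sum fun w _ => domNum_le_DOM (hD.comap (lexProdLeft G H w))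
    _ = DOM G * Fintype.card W := by simp [mul_comm]

theorem DOM_lexProd_le_DOM_right_mul_card (G : SimpleGraph V) (H : SimpleGraph W) :
    DOM (lexProd G H) ≤ DOM H * Fintype.card V := by
  classical
  refine DOM_le fun D hD => ?_
  calc domNum D ≤ ∑ u, domNum (fun w w' => D (u, w) (u, w')) :=
        domNum_le_sum_of_cover D (fun u w => (u, w)) fun p => ⟨p.1, p.2, rfl⟩
    _ ≤ ∑ _u : V, DOM H := sum_le_sum fun u _ => domNum_le_DOM (hD.comap (lexProdRight G H u))
    _ = DOM H * Fintype.card V := by simp [mul_comm]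

end LexProd

theorem stmt17 {V W : Type*} [Fintype V] [Fintype W]
    (G : SimpleGraph V) (H : SimpleGraph W) :
    _root_.indepNum G * DOM H ≤ DOM (lexProd G H) ∧
    DOM (lexProd G H) ≤ min (DOM G * Fintype.card W) (DOM H * Fintype.card V) :=
  ⟨indepNum_mul_DOM_le_DOM_lexProd G H,
    le_min (DOM_lexProd_le_DOM_left_mul_card G H) (DOM_lexProd_le_DOM_right_mul_card G H)⟩
end
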